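/- The polyhedral cone in ℝ^6 cut out by the conditions x_1 ≥ 0, x_2 ≥ 0, x_1+x_2+x_3 ≥ 0, x_1+x_2+x_4 ≥ 0, x_1+x_2+x_3+x_4 ≥ 0, x_1+x_2+x_3+x_4+x_5 ≥ 0, x_1+x_2+x_3+x_4+x_6 ≥ 0, x_1+⋯+x_6 = 0 equals the conical hull of the eight vectors e_1−e_3, e_1−e_4, e_2−e_3, e_2−e_4, e_3−e_5, e_3−e_6, e_4−e_5, e_4−e_6, i.e., the set of all nonnegative real combinations of these vectors. -/

import Mathlib

/-!
Read a combination `∑ tᵢ • gensᵢ` as a flow on the layered network `{1, 2} → {3, 4} → {5, 6}`,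
one edge per generator, with `x` as the net outflow at each node. Given `x` in the plate, push
`p = max 0 (-x₃)` units into node 3 and the rest of the supply `x₁ + x₂` into node 4; the
inequalities say exactly that both layers are then balanced transportation problems with
nonnegative supplies and demands, and a `2 × 2` transportation problem always has a nonnegative
solution (the northwest-corner rule).
-/

/-- The standard basis vector `eᵢ` of `ℝ⁶`. -/
noncomputable def e (i : Fin 6) : Fin 6 → ℝ := Pi.single i 1

/-- The eight generating roots of the degree-2 standard nonplanar plate. -/
noncomputable def gens : Fin 8 → (Fin 6 → ℝ) :=
  ![e 0 - e 2, e 0 - e 3, e 1 - e 2, e 1 - e 3, e 2 - e 4, e 2 - e 5, e 3 - e 4, e 3 - e 5]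

theorem exists_transportPlan_two_by_two {a b c d : ℝ} (ha : 0 ≤ a) (hb : 0 ≤ b) (hc : 0 ≤ c)
    (hd : 0 ≤ d) (hbal : a + b = c + d) :
    ∃ t₁₁ t₁₂ t₂₁ t₂₂ : ℝ, 0 ≤ t₁₁ ∧ 0 ≤ t₁₂ ∧ 0 ≤ t₂₁ ∧ 0 ≤ t₂₂ ∧
      t₁₁ + t₁₂ = a ∧ t₂₁ + t₂₂ = b ∧ t₁₁ + t₂₁ = c ∧ t₁₂ + t₂₂ = d := by
  refine ⟨min a c, a - min a c, c - min a c, b - c + min a c, le_min ha hc,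
    sub_nonneg.2 (min_le_left a c), sub_nonneg.2 (min_le_right a c), ?_, by ring, by ring,
    by ring, by linarith⟩
  rcases min_cases a c with ⟨h, -⟩ | ⟨h, -⟩ <;> rw [h] <;> linarith

theorem sum_smul_gens (t : Fin 8 → ℝ) :
    ∑ i, t i • gens i = ![t 0 + t 1, t 2 + t 3, -(t 0 + t 2) + t 4 + t 5,
      -(t 1 + t 3) + t 6 + t 7, -(t 4 + t 6), -(t 5 + t 7)] := by
  ext j
  fin_cases j <;>
    simp only [gens, e, Fin.sum_univ_eight, Finset.sum_apply, Pi.smul_apply, Pi.sub_apply,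
      smul_eq_mul, Fin.zero_eta, Fin.mk_one, Fin.reduceFinMk, Matrix.cons_val, Pi.single_apply,
      Fin.reduceEq, if_true, if_false] <;>
    ring

/-- The nonplanar plate, cut out by the inequalities, equals the conical hull of the eight
roots `e₁−e₃, e₁−e₄, e₂−e₃, e₂−e₄, e₃−e₅, e₃−e₆, e₄−e₅, e₄−e₆`. -/
theorem plate_eq_conical_hull :
    {x : Fin 6 → ℝ |
        0 ≤ x 0 ∧ 0 ≤ x 1 ∧ 0 ≤ x 0 + x 1 + x 2 ∧ 0 ≤ x 0 + x 1 + x 3 ∧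
        0 ≤ x 0 + x 1 + x 2 + x 3 ∧ 0 ≤ x 0 + x 1 + x 2 + x 3 + x 4 ∧
        0 ≤ x 0 + x 1 + x 2 + x 3 + x 5 ∧
        x 0 + x 1 + x 2 + x 3 + x 4 + x 5 = 0} =
    {y : Fin 6 → ℝ | ∃ t : Fin 8 → ℝ, (∀ i, 0 ≤ t i) ∧ y = ∑ i, t i • gens i} := by
  ext x
  simp only [Set.mem_ofPred_eq, sum_smul_gens]
  constructor
  · rintro ⟨h0, h1, h2, h3, h4, h5, h6, hsum⟩
    obtain ⟨p, hp, hp₂, hp₀₁, hp₀₁₃⟩ :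
        ∃ p, 0 ≤ p ∧ -x 2 ≤ p ∧ p ≤ x 0 + x 1 ∧ p ≤ x 0 + x 1 + x 3 :=
      ⟨max 0 (-x 2), le_max_left _ _, le_max_right _ _, max_le (by linarith) (by linarith),
        max_le h3 (by linarith)⟩
    obtain ⟨s₁₁, s₁₂, s₂₁, s₂₂, hs₁₁, hs₁₂, hs₂₁, hs₂₂, hs₁, hs₂, hs₃, hs₄⟩ :=
      exists_transportPlan_two_by_two h0 h1 hp (sub_nonneg.2 hp₀₁) (add_sub_cancel p _).symm
    obtain ⟨r₁₁, r₁₂, r₂₁, r₂₂, hr₁₁, hr₁₂, hr₂₁, hr₂₂, hr₁, hr₂, hr₃, hr₄⟩ :=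
      exists_transportPlan_two_by_two (a := p + x 2) (b := x 0 + x 1 - p + x 3) (c := -x 4)
        (d := -x 5) (by linarith) (by linarith) (by linarith) (by linarith) (by linarith)
    refine ⟨![s₁₁, s₁₂, s₂₁, s₂₂, r₁₁, r₁₂, r₂₁, r₂₂], fun i ↦ by fin_cases i <;> assumption, ?_⟩
    ext j
    fin_cases j <;> simp only [Fin.zero_eta, Fin.mk_one, Fin.reduceFinMk, Matrix.cons_val] <;>
      linarith
  · rintro ⟨t, ht, rfl⟩
    have := ht 0; have := ht 1; have := ht 2; have := ht 3
    have := ht 4; have := ht 5; have := ht 6; have := ht 7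
    simp only [Matrix.cons_val]
    refine ⟨?_, ?_, ?_, ?_, ?_, ?_, ?_, ?_⟩ <;> linarith
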